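/- Let G be a countable discrete group and let M = {x ∈ βG : r(x) is a minimal closed right ideal}. The following are equivalent: (1) βG contains a unique minimal closed right ideal; (2) IT(r(x)) = G for every x ∈ M; (3) there exists x ∈ M such that IT(r(x)) has finite index in G, i.e., finitely many left translates of IT(r(x)) cover G. -/

import Mathlib

open Filter Topology Set

-- The semigroup structure on `βG = Ultrafilter G` extending the multiplication of `G`;
-- with this structure `βG` is a compact right topological semigroup.
attribute [local instance] Ultrafilter.semigroup

/-- `R ⊆ βG` is a right ideal: `R · βG ⊆ R`. -/
def IsRightIdeal {G : Type*} [Group G] (R : Set (Ultrafilter G)) : Prop :=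
  ∀ x ∈ R, ∀ y : Ultrafilter G, x * y ∈ R

/-- `I ⊆ βG` is a two-sided ideal: `I` is nonempty, `βG · I ⊆ I` and `I · βG ⊆ I`. -/
def IsTwoSidedIdeal {G : Type*} [Group G] (I : Set (Ultrafilter G)) : Prop :=
  I.Nonempty ∧ ∀ x ∈ I, ∀ y : Ultrafilter G, x * y ∈ I ∧ y * x ∈ I

/-- A minimal closed right ideal of `βG`. -/
def IsMinClosedRightIdeal {G : Type*} [Group G] (R : Set (Ultrafilter G)) : Prop :=
  R.Nonempty ∧ IsClosed R ∧ IsRightIdeal R ∧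
    ∀ R' : Set (Ultrafilter G), R' ⊆ R → R'.Nonempty → IsClosed R' → IsRightIdeal R' → R' = R

/-- `r x`, the principal closed right ideal generated by `x`: the closure of `x · βG`. -/
def rIdeal {G : Type*} [Group G] (x : Ultrafilter G) : Set (Ultrafilter G) :=
  closure (Set.range fun y : Ultrafilter G => x * y)

/-- `M = {x ∈ βG : r(x) is a minimal closed right ideal}`. -/
def MSet (G : Type*) [Group G] : Set (Ultrafilter G) :=
  {x : Ultrafilter G | IsMinClosedRightIdeal (rIdeal x)}

/-- `IT(A) = {g ∈ G : A ∩ gA ≠ ∅}`, the set of intersecting (left) translates of `A ⊆ βG`. -/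
def IT {G : Type*} [Group G] (A : Set (Ultrafilter G)) : Set G :=
  {g : G | (A ∩ ((fun y : Ultrafilter G => (pure g : Ultrafilter G) * y) '' A)).Nonempty}

section Aux

variable {G : Type*} [Group G]

lemma umap_continuous {α β : Type*} (f : α → β) : Continuous (Ultrafilter.map f) :=
  ultrafilterBasis_is_basis.continuous_iff.2 <| Set.forall_mem_range.mpr fun s ↦ by
    have h : (Ultrafilter.map f) ⁻¹' {u | s ∈ u} = {u | f ⁻¹' s ∈ u} := by
      ext u; exact Ultrafilter.mem_map
    rw [h]
    exact ultrafilter_isOpen_basic _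

lemma uf_pure_mul (g : G) (u : Ultrafilter G) :
    (pure g : Ultrafilter G) * u = Ultrafilter.map (g * ·) u :=
  Ultrafilter.coe_inj.mp <| Filter.ext' fun p => by
    simp [Ultrafilter.eventually_mul]

lemma uf_mul_pure (u : Ultrafilter G) (g : G) :
    u * (pure g : Ultrafilter G) = Ultrafilter.map (· * g) u :=
  Ultrafilter.coe_inj.mp <| Filter.ext' fun p => by
    simp [Ultrafilter.eventually_mul]

lemma uf_pure_mul_pure (g h : G) :
    (pure g : Ultrafilter G) * pure h = pure (g * h) := by
  rw [uf_pure_mul, Ultrafilter.map_pure]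

lemma one_pure_mul (u : Ultrafilter G) : (pure (1 : G) : Ultrafilter G) * u = u := by
  rw [uf_pure_mul]
  have h : ((1 : G) * ·) = (id : G → G) := funext fun x => one_mul x
  rw [h, Ultrafilter.map_id]

lemma mul_pure_one (u : Ultrafilter G) : u * (pure (1 : G) : Ultrafilter G) = u := by
  rw [uf_mul_pure]
  have h : (· * (1 : G)) = (id : G → G) := funext fun x => mul_one x
  rw [h, Ultrafilter.map_id]

lemma continuous_lmul (g : G) :
    Continuous fun u : Ultrafilter G => (pure g : Ultrafilter G) * u := by
  have h : (fun u : Ultrafilter G => (pure g : Ultrafilter G) * u)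
      = Ultrafilter.map (g * ·) := funext fun u => uf_pure_mul g u
  rw [h]; exact umap_continuous _

/-- left translate of a subset of `βG`. -/
def lT (g : G) (A : Set (Ultrafilter G)) : Set (Ultrafilter G) :=
  (fun y : Ultrafilter G => (pure g : Ultrafilter G) * y) '' A

lemma lT_lT (g h : G) (A : Set (Ultrafilter G)) : lT g (lT h A) = lT (g * h) A := by
  unfold lT
  rw [Set.image_image]
  refine Set.image_congr fun y _ => ?_
  rw [← mul_assoc, uf_pure_mul_pure]

lemma lT_one (A : Set (Ultrafilter G)) : lT 1 A = A := by
  unfold lT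
  have h : (fun y : Ultrafilter G => (pure (1:G) : Ultrafilter G) * y) = id :=
    funext fun u => one_pure_mul u
  rw [h, Set.image_id]

lemma lT_cancel (g : G) (A : Set (Ultrafilter G)) : lT g⁻¹ (lT g A) = A := by
  rw [lT_lT, inv_mul_cancel, lT_one]

lemma lT_isClosed {A : Set (Ultrafilter G)} (hA : IsClosed A) (g : G) : IsClosed (lT g A) :=
  (hA.isCompact.image (continuous_lmul g)).isClosed

lemma lT_isRightIdeal {A : Set (Ultrafilter G)} (hA : IsRightIdeal A) (g : G) :
    IsRightIdeal (lT g A) := by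
  rintro x ⟨w, hw, rfl⟩ y
  exact ⟨w * y, hA w hw y, (mul_assoc _ _ _).symm⟩

lemma IT_def (g : G) (A : Set (Ultrafilter G)) : g ∈ IT A ↔ (A ∩ lT g A).Nonempty := Iff.rfl

lemma mem_rIdeal_self (x : Ultrafilter G) : x ∈ rIdeal x :=
  subset_closure ⟨pure 1, mul_pure_one x⟩

lemma rIdeal_isRightIdeal (x : Ultrafilter G) : IsRightIdeal (rIdeal x) := by
  intro z hz y
  have hc : Continuous fun w : Ultrafilter G => w * y := Ultrafilter.continuous_mul_left y
  have h2 : z * y ∈ closure ((fun w : Ultrafilter G => w * y) '' Set.range fun w => x * w) :=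
    image_closure_subset_closure_image hc ⟨z, hz, rfl⟩
  refine closure_mono ?_ h2
  rintro _ ⟨_, ⟨w, rfl⟩, rfl⟩
  exact ⟨w * y, (mul_assoc _ _ _).symm⟩

lemma rIdeal_subset {R : Set (Ultrafilter G)} (hcl : IsClosed R) (hri : IsRightIdeal R)
    {x : Ultrafilter G} (hx : x ∈ R) : rIdeal x ⊆ R := by
  refine closure_minimal ?_ hcl
  rintro _ ⟨y, rfl⟩
  exact hri x hx y

/-- Every element of a minimal closed right ideal generates it; so it lies in `MSet`. -/
lemma mem_MSet_of_mem {R : Set (Ultrafilter G)} (hR : IsMinClosedRightIdeal R)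
    {x : Ultrafilter G} (hx : x ∈ R) : rIdeal x = R ∧ x ∈ MSet G := by
  have hsub : rIdeal x ⊆ R := rIdeal_subset hR.2.1 hR.2.2.1 hx
  have heq : rIdeal x = R :=
    hR.2.2.2 _ hsub ⟨x, mem_rIdeal_self x⟩ isClosed_closure (rIdeal_isRightIdeal x)
  refine ⟨heq, ?_⟩
  show IsMinClosedRightIdeal (rIdeal x)
  rw [heq]; exact hR

/-- Existence of a minimal closed right ideal, by Zorn's lemma and compactness. -/
lemma exists_minClosedRightIdeal (G : Type*) [Group G] :
    ∃ R : Set (Ultrafilter G), IsMinClosedRightIdeal R := by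
  set S : Set (Set (Ultrafilter G)) := {R | R.Nonempty ∧ IsClosed R ∧ IsRightIdeal R} with hS
  have huniv : Set.univ ∈ S := ⟨⟨pure 1, trivial⟩, isClosed_univ, fun x _ y => trivial⟩
  have hch : ∀ c ⊆ S, IsChain (· ⊆ ·) c → c.Nonempty →
      ∃ lb ∈ S, ∀ s ∈ c, lb ⊆ s := by
    intro c hcS hchain hcne
    refine ⟨⋂₀ c, ⟨?_, ?_, ?_⟩, fun s hs => Set.sInter_subset_of_mem hs⟩
    · have : Nonempty c := hcne.to_subtype
      have hdir : DirectedOn (· ⊇ ·) c := by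
        intro U hU V hV
        rcases eq_or_ne U V with rfl | hne'
        · exact ⟨U, hU, Set.Subset.rfl, Set.Subset.rfl⟩
        · rcases hchain hU hV hne' with h | h
          · exact ⟨U, hU, Set.Subset.rfl, h⟩
          · exact ⟨V, hV, h, Set.Subset.rfl⟩
      exact IsCompact.nonempty_sInter_of_directed_nonempty_isCompact_isClosed
        hdir (fun U hU => (hcS hU).1)
        (fun U hU => (hcS hU).2.1.isCompact) (fun U hU => (hcS hU).2.1)
    · exact isClosed_sInter fun U hU => (hcS hU).2.1
    · intro x hx y
      exact fun U hU => (hcS hU).2.2 x (hx U hU) y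
  obtain ⟨m, -, hm⟩ := zorn_superset_nonempty S hch _ huniv
  refine ⟨m, hm.prop.1, hm.prop.2.1, hm.prop.2.2, fun R' hsub hne hcl hri => ?_⟩
  exact Set.Subset.antisymm hsub (hm.2 ⟨hne, hcl, hri⟩ hsub)

/-- For a minimal closed right ideal, intersecting translates are stabilizing translates. -/
lemma lT_eq_of_mem_IT {R : Set (Ultrafilter G)} (hR : IsMinClosedRightIdeal R)
    {g : G} (hg : g ∈ IT R) : lT g R = R := by
  obtain ⟨hne, hcl, hri, hmin⟩ := hR
  have hP : R ∩ lT g R = R := by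
    refine hmin _ Set.inter_subset_left hg (hcl.inter (lT_isClosed hcl g)) ?_
    intro x hx y
    exact ⟨hri x hx.1 y, lT_isRightIdeal hri g x hx.2 y⟩
  have hRsub : R ⊆ lT g R := by
    intro x hx
    have hx2 : x ∈ R ∩ lT g R := by rw [hP]; exact hx
    exact hx2.2
  have hinv : lT g⁻¹ R ⊆ R := by
    have := Set.image_mono (f := fun y : Ultrafilter G => (pure g⁻¹ : Ultrafilter G) * y) hRsub
    calc lT g⁻¹ R ⊆ lT g⁻¹ (lT g R) := this
    _ = R := lT_cancel g R
  have hinv_eq : lT g⁻¹ R = R := by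
    refine hmin _ hinv ?_ (lT_isClosed hcl g⁻¹) (lT_isRightIdeal hri g⁻¹)
    exact hne.image _
  calc lT g R = lT g (lT g⁻¹ R) := by rw [hinv_eq]
  _ = R := by rw [lT_lT, mul_inv_cancel, lT_one]

lemma mem_IT_of_lT_eq {R : Set (Ultrafilter G)} (hne : R.Nonempty)
    {g : G} (h : lT g R = R) : g ∈ IT R := by
  obtain ⟨x, hx⟩ := hne
  refine ⟨x, hx, ?_⟩
  show x ∈ lT g R
  rw [h]; exact hx

lemma IT_mul {R : Set (Ultrafilter G)} (hR : IsMinClosedRightIdeal R)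
    {g h : G} (hg : g ∈ IT R) (hh : h ∈ IT R) : g * h ∈ IT R := by
  refine mem_IT_of_lT_eq hR.1 ?_
  rw [← lT_lT, lT_eq_of_mem_IT hR hh, lT_eq_of_mem_IT hR hg]

lemma IT_inv {R : Set (Ultrafilter G)} (hR : IsMinClosedRightIdeal R)
    {g : G} (hg : g ∈ IT R) : g⁻¹ ∈ IT R := by
  refine mem_IT_of_lT_eq hR.1 ?_
  conv_lhs => rw [← lT_eq_of_mem_IT hR hg]
  exact lT_cancel g R

omit [Group G] in
lemma mem_closure_pure {A : Set G} {z : Ultrafilter G} (hA : A ∈ z) :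
    z ∈ closure ((pure : G → Ultrafilter G) '' A) := by
  rw [ultrafilterBasis_is_basis.mem_closure_iff]
  rintro o ⟨B, rfl⟩ hzB
  obtain ⟨a, haA, haB⟩ := Ultrafilter.nonempty_of_mem (inter_mem hA hzB)
  exact ⟨pure a, haB, ⟨a, haA, rfl⟩⟩

/-- The key step: if the translates of `IT (r x)` by a finite set cover `G`,
then `IT (r x) = G`. -/
lemma IT_eq_univ_of_finite_cover {x : Ultrafilter G} (hx : x ∈ MSet G)
    (F : Finset G) (hF : ∀ g : G, ∃ f ∈ F, f⁻¹ * g ∈ IT (rIdeal x)) :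
    IT (rIdeal x) = Set.univ := by
  set R := rIdeal x with hRdef
  have hR : IsMinClosedRightIdeal R := hx
  set H := IT R with hHdef
  obtain ⟨e, he⟩ := hR.1
  -- every element of R contains H
  have key : ∀ z ∈ R, H ∈ z := by
    intro z hz
    have hcover : (⋃ f ∈ (F : Set G), {g : G | f⁻¹ * g ∈ H}) ∈ z := by
      refine Filter.mem_of_superset univ_mem ?_
      intro g _
      obtain ⟨f, hfF, hf⟩ := hF g
      exact Set.mem_biUnion hfF hf
    obtain ⟨f, hfF, hfz⟩ := (Ultrafilter.finite_biUnion_mem_iff (F : Set G).toFinite).mp hcover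
    -- show f ∈ H by producing a point of R ∩ fR
    have hfH : f ∈ H := by
      have hclosR : z ∈ closure ((pure : G → Ultrafilter G) '' {g : G | f⁻¹ * g ∈ H}) :=
        mem_closure_pure hfz
      have hze : z * e ∈ lT f R := by
        have hc : Continuous fun w : Ultrafilter G => w * e := Ultrafilter.continuous_mul_left e
        have h2 : z * e ∈ closure ((fun w : Ultrafilter G => w * e) ''
            ((pure : G → Ultrafilter G) '' {g : G | f⁻¹ * g ∈ H})) :=
          image_closure_subset_closure_image hc ⟨z, hclosR, rfl⟩
        have hsub : ((fun w : Ultrafilter G => w * e) ''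
            ((pure : G → Ultrafilter G) '' {g : G | f⁻¹ * g ∈ H})) ⊆ lT f R := by
          rintro _ ⟨_, ⟨a, ha, rfl⟩, rfl⟩
          have h3 : (pure (f⁻¹ * a) : Ultrafilter G) * e ∈ R := by
            have h4 := lT_eq_of_mem_IT hR ha
            exact h4 ▸ ⟨e, he, rfl⟩
          refine ⟨(pure (f⁻¹ * a) : Ultrafilter G) * e, h3, ?_⟩
          show (pure f : Ultrafilter G) * ((pure (f⁻¹ * a) : Ultrafilter G) * e) = pure a * e
          rw [← mul_assoc, uf_pure_mul_pure, mul_inv_cancel_left]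
        exact closure_minimal hsub (lT_isClosed hR.2.1 f) h2
      exact ⟨z * e, hR.2.2.1 z hz e, hze⟩
    -- now {g | f⁻¹ g ∈ H} ⊆ H since f ∈ H
    refine Filter.mem_of_superset hfz ?_
    intro g hg
    have : f * (f⁻¹ * g) ∈ H := IT_mul hR hfH hg
    simpa [mul_inv_cancel_left] using this
  -- conclude: for any g, e * pure g ∈ R so H ∈ e * pure g
  ext g
  simp only [Set.mem_univ, iff_true]
  have h1 : H ∈ e := key e he
  have h2 : H ∈ e * (pure g : Ultrafilter G) := key _ (hR.2.2.1 e he (pure g))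
  have h3 : {a : G | a * g ∈ H} ∈ e := by
    rw [uf_mul_pure] at h2
    exact Ultrafilter.mem_map.mp h2
  obtain ⟨a, haH, hag⟩ := Ultrafilter.nonempty_of_mem (inter_mem h1 h3)
  have : a⁻¹ * (a * g) ∈ H := IT_mul hR (IT_inv hR haH) hag
  simpa [inv_mul_cancel_left] using this

/-- If `IT (r x) = G` for some `x ∈ MSet`, then the minimal closed right ideal is unique. -/
lemma existsUnique_of_IT_univ {x : Ultrafilter G} (hx : x ∈ MSet G)
    (hIT : IT (rIdeal x) = Set.univ) :
    ∃! R : Set (Ultrafilter G), IsMinClosedRightIdeal R := by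
  set R := rIdeal x with hRdef
  have hR : IsMinClosedRightIdeal R := hx
  -- R is a left ideal
  have hleft : ∀ (u : Ultrafilter G), ∀ z ∈ R, u * z ∈ R := by
    intro u z hz
    have hu : u ∈ closure (Set.range (pure : G → Ultrafilter G)) := denseRange_pure u
    have hc : Continuous fun w : Ultrafilter G => w * z := Ultrafilter.continuous_mul_left z
    have h2 : u * z ∈ closure ((fun w : Ultrafilter G => w * z) ''
        Set.range (pure : G → Ultrafilter G)) :=
      image_closure_subset_closure_image hc ⟨u, hu, rfl⟩
    have hsub : ((fun w : Ultrafilter G => w * z) ''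
        Set.range (pure : G → Ultrafilter G)) ⊆ R := by
      rintro _ ⟨_, ⟨g, rfl⟩, rfl⟩
      have hg : g ∈ IT R := hIT ▸ Set.mem_univ g
      have := lT_eq_of_mem_IT hR hg
      exact this ▸ ⟨z, hz, rfl⟩
    exact closure_minimal hsub hR.2.1 h2
  refine ⟨R, hR, fun R' hR' => ?_⟩
  obtain ⟨y, hy⟩ := hR'.1
  obtain ⟨z, hz⟩ := hR.1
  have hmem : y * z ∈ R' ∩ R := ⟨hR'.2.2.1 y hy z, hleft y z hz⟩
  have hsub : R' ∩ R = R' := by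
    refine hR'.2.2.2 _ Set.inter_subset_left ⟨y * z, hmem⟩
      (hR'.2.1.inter hR.2.1) ?_
    intro w hw v
    exact ⟨hR'.2.2.1 w hw.1 v, hR.2.2.1 w hw.2 v⟩
  have hsub2 : R' ⊆ R := by rw [← hsub]; exact Set.inter_subset_right
  exact hR.2.2.2 _ hsub2 hR'.1 hR'.2.1 hR'.2.2.1

end Aux

/-- For a countable discrete group `G`, the following are equivalent:
(1) `βG` contains a unique minimal closed right ideal;
(2) `IT(r(x)) = G` for every `x ∈ M`;
(3) there is `x ∈ M` such that finitely many left translates of `IT(r(x))` cover `G`. -/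
theorem unique_iff_IT {G : Type*} [Group G] [Countable G] :
    ((∃! R : Set (Ultrafilter G), IsMinClosedRightIdeal R) ↔
        ∀ x ∈ MSet G, IT (rIdeal x) = Set.univ) ∧
    ((∃! R : Set (Ultrafilter G), IsMinClosedRightIdeal R) ↔
        ∃ x ∈ MSet G, ∃ F : Finset G, ∀ g : G, ∃ f ∈ F, f⁻¹ * g ∈ IT (rIdeal x)) := by
  have h12 : (∃! R : Set (Ultrafilter G), IsMinClosedRightIdeal R) →
      ∀ x ∈ MSet G, IT (rIdeal x) = Set.univ := by
    rintro ⟨R₀, hR₀, huniq⟩ x hx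
    have hxR : rIdeal x = R₀ := huniq _ hx
    ext g
    simp only [Set.mem_univ, iff_true]
    have hmin : IsMinClosedRightIdeal (lT g (rIdeal x)) := by
      refine ⟨hx.1.image _, lT_isClosed hx.2.1 g, lT_isRightIdeal hx.2.2.1 g, ?_⟩
      intro R' hsub hne hcl hri
      have h1 : lT g⁻¹ R' ⊆ rIdeal x := by
        have := Set.image_mono (f := fun y : Ultrafilter G => (pure g⁻¹ : Ultrafilter G) * y) hsub
        calc lT g⁻¹ R' ⊆ lT g⁻¹ (lT g (rIdeal x)) := this
        _ = rIdeal x := lT_cancel g _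
      have h2 : lT g⁻¹ R' = rIdeal x :=
        hx.2.2.2 _ h1 (hne.image _) (lT_isClosed hcl g⁻¹) (lT_isRightIdeal hri g⁻¹)
      calc R' = lT g (lT g⁻¹ R') := by rw [lT_lT, mul_inv_cancel, lT_one]
      _ = lT g (rIdeal x) := by rw [h2]
    have heq : lT g (rIdeal x) = rIdeal x := by
      rw [huniq _ hmin, hxR]
    exact mem_IT_of_lT_eq hx.1 heq
  have hMne : ∃ x, x ∈ MSet G := by
    obtain ⟨R, hR⟩ := exists_minClosedRightIdeal G
    obtain ⟨x, hx⟩ := hR.1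
    exact ⟨x, (mem_MSet_of_mem hR hx).2⟩
  constructor
  · constructor
    · exact h12
    · intro h2
      obtain ⟨x, hx⟩ := hMne
      exact existsUnique_of_IT_univ hx (h2 x hx)
  · constructor
    · intro h1
      obtain ⟨x, hx⟩ := hMne
      refine ⟨x, hx, {1}, fun g => ⟨1, Finset.mem_singleton_self 1, ?_⟩⟩
      rw [h12 h1 x hx]
      exact Set.mem_univ _
    · rintro ⟨x, hx, F, hF⟩
      exact existsUnique_of_IT_univ hx (IT_eq_univ_of_finite_cover hx F hF)
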